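/- Let C_a, C_t, N_a, s be positive reals, let J ≥ 2 be a natural number, and let l be a real number with 1 ≤ l ≤ J. Then the map x ↦ γ_x(l) is strictly increasing on (0, ∞), i.e., the received SNR increases with the number of elements per passive IRS. -/
import Mathlib


open Real

/-- Received SNR in the multi-IRS WIT system, as a function of the AIRS index `l`:
`γ_x(l) = C_a·C_t·N_a·x^{2(J−1)} / (s·C_a·x^{2(J−l)} + s·C_t·x^{2(l−1)} + s²)`. -/
noncomputable def snr (Ca Ct Na s : ℝ) (J : ℕ) (x l : ℝ) : ℝ :=
  Ca * Ct * Na * x ^ (2 * ((J : ℝ) - 1)) /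
    (s * Ca * x ^ (2 * ((J : ℝ) - l)) + s * Ct * x ^ (2 * (l - 1)) + s ^ 2)

lemma rpow_cross (x y p a : ℝ) (hx : 0 < x) (hxy : x < y) (ha : 0 ≤ a) (hap : a ≤ p) :
    x ^ p * y ^ a ≤ y ^ p * x ^ a := by
  have hy : 0 < y := hx.trans hxy
  have h1 : x ^ p = x ^ a * x ^ (p - a) := by
    rw [← Real.rpow_add hx]; ring_nf
  have h2 : y ^ p = y ^ a * y ^ (p - a) := by
    rw [← Real.rpow_add hy]; ring_nf
  have h3 : x ^ (p - a) ≤ y ^ (p - a) :=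
    Real.rpow_le_rpow hx.le hxy.le (by linarith)
  rw [h1, h2]
  have h4 := mul_le_mul_of_nonneg_left h3
    (mul_pos (Real.rpow_pos_of_pos hx a) (Real.rpow_pos_of_pos hy a)).le
  nlinarith [h4]

/-- The received SNR is strictly increasing in `x = N_p·κ_I` on `(0, ∞)`, i.e., it increases
with the number of elements per passive IRS. -/
theorem stmt_8 (Ca Ct Na s : ℝ) (hCa : 0 < Ca) (hCt : 0 < Ct) (hNa : 0 < Na) (hs : 0 < s)
    (J : ℕ) (hJ : 2 ≤ J) (l : ℝ) (hl1 : 1 ≤ l) (hlJ : l ≤ (J : ℝ)) :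
    StrictMonoOn (fun x : ℝ => snr Ca Ct Na s J x l) (Set.Ioi 0) := by
  intro x hx y hy hxy
  have hx0 : (0:ℝ) < x := hx
  have hy0 : (0:ℝ) < y := hy
  have hJ2 : (2:ℝ) ≤ (J:ℝ) := by exact_mod_cast hJ
  simp only [snr]
  have hDx : 0 < s * Ca * x ^ (2 * ((J : ℝ) - l)) + s * Ct * x ^ (2 * (l - 1)) + s ^ 2 := by
    have := Real.rpow_pos_of_pos hx0 (2 * ((J : ℝ) - l))
    have := Real.rpow_pos_of_pos hx0 (2 * (l - 1))
    positivity
  have hDy : 0 < s * Ca * y ^ (2 * ((J : ℝ) - l)) + s * Ct * y ^ (2 * (l - 1)) + s ^ 2 := by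
    have := Real.rpow_pos_of_pos hy0 (2 * ((J : ℝ) - l))
    have := Real.rpow_pos_of_pos hy0 (2 * (l - 1))
    positivity
  rw [div_lt_div_iff₀ hDx hDy]
  have h1 : x ^ (2 * ((J : ℝ) - 1)) * y ^ (2 * ((J : ℝ) - l)) ≤
      y ^ (2 * ((J : ℝ) - 1)) * x ^ (2 * ((J : ℝ) - l)) :=
    rpow_cross x y _ _ hx0 hxy (by linarith) (by linarith)
  have h2 : x ^ (2 * ((J : ℝ) - 1)) * y ^ (2 * (l - 1)) ≤
      y ^ (2 * ((J : ℝ) - 1)) * x ^ (2 * (l - 1)) :=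
    rpow_cross x y _ _ hx0 hxy (by linarith) (by linarith)
  have h3 : x ^ (2 * ((J : ℝ) - 1)) < y ^ (2 * ((J : ℝ) - 1)) :=
    Real.rpow_lt_rpow hx0.le hxy (by linarith)
  have e1 := mul_le_mul_of_nonneg_left h1 (show (0:ℝ) ≤ Ca * Ct * Na * (s * Ca) by positivity)
  have e2 := mul_le_mul_of_nonneg_left h2 (show (0:ℝ) ≤ Ca * Ct * Na * (s * Ct) by positivity)
  have e3 := mul_lt_mul_of_pos_left h3 (show (0:ℝ) < Ca * Ct * Na * s ^ 2 by positivity)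
  nlinarith [e1, e2, e3]
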